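/- In a synchronous refinement algebra with conjunctive sequential composition, for atomic steps a, b and command c: (a⋆;c) ⊗ b^∞ = (a ⊗ b)⋆;(c ⊗ b^∞), where b^∞ = b^ω;⊤. -/
import Mathlib


/-- A Demonic Refinement Algebra over a complete distributive lattice of
commands, ordered by refinement (`c ⊑ d ↔ c ⊓ d = c`, i.e. `c ≤ d`).
Nondeterministic choice is the lattice meet `⊓`/`sInf`. -/
structure DRA (C : Type*) [CompleteLattice C] where
  seq : C → C → C
  nil : C
  seq_assoc : ∀ a b c : C, seq (seq a b) c = seq a (seq b c)
  seq_nil : ∀ c : C, seq c nil = c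
  nil_seq : ∀ c : C, seq nil c = c
  bot_seq : ∀ c : C, seq ⊥ c = ⊥
  /-- `;` distributes over arbitrary choices from the right -/
  seq_sInf_right : ∀ (S : Set C) (d : C), seq (sInf S) d = ⨅ c ∈ S, seq c d
  /-- `;` distributes over non-empty choices from the left (conjunctivity) -/
  seq_sInf_left : ∀ (c : C) (S : Set C), S.Nonempty → seq c (sInf S) = ⨅ d ∈ S, seq c d
  /-- the lattice of commands is distributive -/
  inf_sup_distrib : ∀ a b c : C, a ⊓ (b ⊔ c) = (a ⊓ b) ⊔ (a ⊓ c)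

namespace DRA

variable {C : Type*} [CompleteLattice C] (A : DRA C)

theorem seq_mono_right (c : C) : Monotone (A.seq c) := by
  intro x y h
  have hs : sInf ({x, y} : Set C) = x := by
    simp [sInf_insert, inf_eq_left.mpr h]
  have hd := A.seq_sInf_left c {x, y} ⟨x, by simp⟩
  rw [hs, iInf_pair] at hd
  rw [hd]
  exact inf_le_right

/-- the function `x ↦ nil ⊓ c;x` as a monotone map -/
def iterFun (c : C) : C →o C :=
  ⟨fun x => A.nil ⊓ A.seq c x, fun _ _ h => inf_le_inf_left _ (A.seq_mono_right c h)⟩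

/-- finite iteration `c⋆`, the greatest fixed point of `x ↦ nil ⊓ c;x` -/
def fiter (c : C) : C := OrderHom.gfp (A.iterFun c)

/-- omega iteration `c^ω`, the least fixed point of `x ↦ nil ⊓ c;x` -/
def omega (c : C) : C := OrderHom.lfp (A.iterFun c)

/-- infinite iteration `c^∞ = c^ω ; ⊤` -/
def infIter (c : C) : C := A.seq (A.omega c) ⊤

/-- finite powers: `c^0 = nil`, `c^(i+1) = c ; c^i` -/
def pow (c : C) : ℕ → C
  | 0 => A.nil
  | n + 1 => A.seq c (pow c n)

end DRA

/-- A DRA extended with a Boolean sub-algebra of atomic steps, with least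
element `alpha` and greatest element `⊤`, satisfying the atomic-step
interchange axiom. -/
structure AtomicDRA (C : Type*) [CompleteLattice C] extends DRA C where
  Atomic : Set C
  alpha : C
  alpha_atomic : alpha ∈ Atomic
  top_atomic : (⊤ : C) ∈ Atomic
  atomic_inf : ∀ a ∈ Atomic, ∀ b ∈ Atomic, a ⊓ b ∈ Atomic
  atomic_sup : ∀ a ∈ Atomic, ∀ b ∈ Atomic, a ⊔ b ∈ Atomic
  aneg : C → C
  aneg_atomic : ∀ a ∈ Atomic, aneg a ∈ Atomic
  alpha_le : ∀ a ∈ Atomic, alpha ≤ a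
  aneg_sup : ∀ a ∈ Atomic, a ⊔ aneg a = ⊤
  aneg_inf : ∀ a ∈ Atomic, a ⊓ aneg a = alpha
  /-- atomic-step interchange axiom: `(a;c) ⊔ (b;d) = (a ⊔ b);(c ⊔ d)` -/
  atomic_interchange : ∀ a ∈ Atomic, ∀ b ∈ Atomic, ∀ c d : C,
    seq a c ⊔ seq b d = seq (a ⊔ b) (c ⊔ d)

namespace AtomicDRA

variable {C : Type*} [CompleteLattice C] (A : AtomicDRA C)

/-- the assumption command `⦃a⦄ = a ⊓ !a;⊥` for an atomic step `a` -/
def assume (a : C) : C := a ⊓ A.seq (A.aneg a) ⊥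

end AtomicDRA

/-- A Synchronous Refinement Algebra: a DRA with Boolean sub-algebras of
atomic steps and tests, and an abstract synchronisation operator `⊗` with
identity command `one` and atomic-step identity `aone`. -/
structure SRA (C : Type*) [CompleteLattice C] extends AtomicDRA C where
  Test : Set C
  nil_test : nil ∈ Test
  top_test : (⊤ : C) ∈ Test
  test_inf : ∀ t ∈ Test, ∀ t' ∈ Test, t ⊓ t' ∈ Test
  test_sup : ∀ t ∈ Test, ∀ t' ∈ Test, t ⊔ t' ∈ Test
  tneg : C → C
  tneg_test : ∀ t ∈ Test, tneg t ∈ Test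
  nil_le_test : ∀ t ∈ Test, nil ≤ t
  tneg_sup : ∀ t ∈ Test, t ⊔ tneg t = ⊤
  tneg_inf : ∀ t ∈ Test, t ⊓ tneg t = nil
  test_interchange : ∀ t ∈ Test, ∀ t' ∈ Test, ∀ c d : C,
    seq t c ⊔ seq t' d = seq (t ⊔ t') (c ⊔ d)
  /-- the synchronisation operator `⊗` -/
  sync : C → C → C
  /-- the identity command of `⊗` -/
  one : C
  /-- the atomic-step identity of `⊗` -/
  aone : C
  aone_atomic : aone ∈ Atomic
  sync_assoc : ∀ c₀ c₁ c₂ : C, sync c₀ (sync c₁ c₂) = sync (sync c₀ c₁) c₂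
  sync_comm : ∀ c d : C, sync c d = sync d c
  sync_one : ∀ c : C, sync c one = c
  /-- `⊗` distributes over non-empty nondeterministic choices -/
  sync_sInf : ∀ (c : C) (S : Set C), S.Nonempty →
    sync c (sInf S) = ⨅ d ∈ S, sync c d
  /-- atomic steps are closed under `⊗` -/
  sync_atomic : ∀ a ∈ Atomic, ∀ b ∈ Atomic, sync a b ∈ Atomic
  sync_aone : ∀ a ∈ Atomic, sync a aone = a
  /-- weak interchange: `c₀;c₁ ⊗ d₀;d₁ ⊑ (c₀⊗d₀);(c₁⊗d₁)` -/
  sync_weak_interchange : ∀ c₀ c₁ d₀ d₁ : C,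
    sync (seq c₀ c₁) (seq d₀ d₁) ≤ seq (sync c₀ d₀) (sync c₁ d₁)
  /-- atomic interchange: `(a;c) ⊗ (b;d) = (a⊗b);(c⊗d)` for atomic `a`, `b` -/
  atomic_sync_interchange : ∀ a ∈ Atomic, ∀ b ∈ Atomic, ∀ c d : C,
    sync (seq a c) (seq b d) = seq (sync a b) (sync c d)
  /-- `a^∞ ⊗ b^∞ = (a⊗b)^∞` for atomic `a`, `b` -/
  sync_infIter : ∀ a ∈ Atomic, ∀ b ∈ Atomic,
    sync (toDRA.infIter a) (toDRA.infIter b) = toDRA.infIter (sync a b)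
  /-- `nil ⊗ nil = nil` -/
  nil_sync_nil : sync nil nil = nil
  /-- `(a;c) ⊗ nil = ⊤` for atomic `a` -/
  atomic_seq_sync_nil : ∀ a ∈ Atomic, ∀ c : C, sync (seq a c) nil = ⊤
  /-- tests distribute over `⊗`: `t;c ⊗ t;d = t;(c ⊗ d)` -/
  test_sync_interchange : ∀ t ∈ Test, ∀ c d : C,
    sync (seq t c) (seq t d) = seq t (sync c d)

section Aux

variable {C : Type*} [CompleteLattice C]

lemma DRA.seq_iInf_right (A : DRA C) {ι : Type*} (f : ι → C) (d : C) :
    A.seq (⨅ i, f i) d = ⨅ i, A.seq (f i) d := by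
  have h := A.seq_sInf_right (Set.range f) d
  rw [sInf_range] at h
  rw [h, iInf_range]

lemma DRA.seq_iInf_left (A : DRA C) {ι : Type*} [Nonempty ι] (c : C) (f : ι → C) :
    A.seq c (⨅ i, f i) = ⨅ i, A.seq c (f i) := by
  have h := A.seq_sInf_left c (Set.range f) (Set.range_nonempty f)
  rw [sInf_range] at h
  rw [h, iInf_range]

lemma DRA.fiter_eq_iInf_pow (A : DRA C) (a : C) :
    A.fiter a = ⨅ i, A.pow a i := by
  apply le_antisymm
  · apply le_iInf
    intro i
    induction i with
    | zero =>
      have h : A.fiter a = A.nil ⊓ A.seq a (A.fiter a) :=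
        (OrderHom.map_gfp (A.iterFun a)).symm
      exact h.le.trans inf_le_left
    | succ n ih =>
      have h : A.fiter a = A.nil ⊓ A.seq a (A.fiter a) :=
        (OrderHom.map_gfp (A.iterFun a)).symm
      calc A.fiter a ≤ A.seq a (A.fiter a) := h.le.trans inf_le_right
        _ ≤ A.seq a (A.pow a n) := A.seq_mono_right a ih
        _ = A.pow a (n + 1) := rfl
  · apply OrderHom.le_gfp
    show (⨅ i, A.pow a i) ≤ A.nil ⊓ A.seq a (⨅ i, A.pow a i)
    apply le_inf
    · exact iInf_le _ 0
    · rw [A.seq_iInf_left]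
      apply le_iInf
      intro i
      exact iInf_le _ (i + 1)

lemma DRA.infIter_unfold (A : DRA C) (b : C) :
    A.infIter b = A.seq b (A.infIter b) := by
  have h : A.omega b = A.nil ⊓ A.seq b (A.omega b) :=
    (OrderHom.map_lfp (A.iterFun b)).symm
  have h3 : A.nil ⊓ A.seq b (A.omega b) = sInf {A.nil, A.seq b (A.omega b)} := by
    simp [sInf_insert]
  show A.seq (A.omega b) ⊤ = A.seq b (A.seq (A.omega b) ⊤)
  conv_lhs => rw [h, h3, A.seq_sInf_right, iInf_pair, A.nil_seq, A.seq_assoc]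
  rw [top_inf_eq]

lemma DRA.infIter_pow_unfold (A : DRA C) (b : C) (i : ℕ) :
    A.infIter b = A.seq (A.pow b i) (A.infIter b) := by
  induction i with
  | zero => rw [DRA.pow, A.nil_seq]
  | succ n ih =>
    rw [DRA.pow, A.seq_assoc, ← ih, ← A.infIter_unfold]

lemma SRA.sync_iInf_left (A : SRA C) {ι : Type*} [Nonempty ι] (f : ι → C) (d : C) :
    A.sync (⨅ i, f i) d = ⨅ i, A.sync (f i) d := by
  rw [A.sync_comm]
  have h := A.sync_sInf d (Set.range f) (Set.range_nonempty f)
  rw [sInf_range] at h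
  rw [h, iInf_range]
  exact iInf_congr fun i => A.sync_comm d (f i)

lemma SRA.pow_sync_interchange (A : SRA C) {a b : C} (ha : a ∈ A.Atomic)
    (hb : b ∈ A.Atomic) (c d : C) (i : ℕ) :
    A.sync (A.seq (A.pow a i) c) (A.seq (A.pow b i) d) =
      A.seq (A.pow (A.sync a b) i) (A.sync c d) := by
  induction i with
  | zero =>
    simp only [DRA.pow, A.nil_seq]
  | succ n ih =>
    simp only [DRA.pow, A.seq_assoc]
    rw [A.atomic_sync_interchange a ha b hb, ih]

end Aux

/-- Synchronising finite with infinite iteration: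
`(a⋆;c) ⊗ b^∞ = (a⊗b)⋆;(c ⊗ b^∞)`. -/
theorem atomic_iteration_finite_infinite {C : Type*} [CompleteLattice C]
    (A : SRA C) :
    ∀ a ∈ A.Atomic, ∀ b ∈ A.Atomic, ∀ c : C,
      A.sync (A.seq (A.fiter a) c) (A.infIter b) =
        A.seq (A.fiter (A.sync a b)) (A.sync c (A.infIter b)) := by
  intro a ha b hb c
  rw [A.fiter_eq_iInf_pow a, A.fiter_eq_iInf_pow (A.sync a b),
    A.seq_iInf_right, A.seq_iInf_right, A.sync_iInf_left]
  apply iInf_congr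
  intro i
  calc A.sync (A.seq (A.pow a i) c) (A.infIter b)
      = A.sync (A.seq (A.pow a i) c) (A.seq (A.pow b i) (A.infIter b)) := by
        rw [← A.infIter_pow_unfold b i]
    _ = A.seq (A.pow (A.sync a b) i) (A.sync c (A.infIter b)) :=
        A.pow_sync_interchange ha hb c (A.infIter b) i
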